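/- Let M be an episodic tabular MDP with deterministic transitions (for each h, s, a there is f_h(s,a) ∈ S with P_h(f_h(s,a)|s,a) = 1) and a deterministic expert policy π^E (with π^E_h(·|s) a point mass at e_h(s)). Let the dataset D consist of m ≥ 1 i.i.d. expert trajectories (equivalently, determined by m i.i.d. initial states drawn from ρ, since thereafter actions are e_h(s_h) and next states f_h(s_h, a_h)), and let π^{BC}(D) be the behavioral cloning policy. Then V^{π^E} − E_D[V^{π^{BC}(D)}] ≤ |S|·H/(e·m), where e is Euler's number. -/

import Mathlib

/-! With deterministic dynamics and expert, the value of a policy is the `ρ`-average of its values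
from single initial states, and from an initial state that occurs in the data behavioral cloning
replays the expert trajectory exactly, while from any other it loses at most `H`. Hence the gap is
at most `H` times the `ρ`-mass of the initial states missing from the data, whose expectation is
`∑ₛ ρ(s) (1 - ρ(s))^m`, and `p (1 - p)^m ≤ p e^{-pm} ≤ 1 / (e m)`. -/

open Finset

/-- State distribution `d^π_h` of a policy `π` in an episodic tabular MDP
(time steps are 0-indexed: `stateDist ρ P π 0 = ρ`). -/
noncomputable def stateDist {S A : Type*} [Fintype S] [Fintype A] (ρ : S → ℝ)
    (P : ℕ → S → A → S → ℝ) (π : ℕ → S → A → ℝ) : ℕ → S → ℝ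
  | 0 => ρ
  | h + 1 => fun s' => ∑ s : S, ∑ a : A, stateDist ρ P π h s * π h s a * P h s a s'

/-- State-action distribution `P^π_h(s,a) = d^π_h(s) π_h(a|s)`. -/
noncomputable def saDist {S A : Type*} [Fintype S] [Fintype A] (ρ : S → ℝ)
    (P : ℕ → S → A → S → ℝ) (π : ℕ → S → A → ℝ) (h : ℕ) (s : S) (a : A) : ℝ :=
  stateDist ρ P π h s * π h s a

/-- Policy value `V^π = Σ_{h<H} Σ_{(s,a)} P^π_h(s,a) r_h(s,a)`. -/
noncomputable def policyValue {S A : Type*} [Fintype S] [Fintype A] (ρ : S → ℝ)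
    (P : ℕ → S → A → S → ℝ) (π : ℕ → S → A → ℝ) (r : ℕ → S → A → ℝ) (H : ℕ) : ℝ :=
  ∑ h ∈ Finset.range H, ∑ s : S, ∑ a : A, saDist ρ P π h s a * r h s a

/-- `π` is a (Markovian, non-stationary) policy. -/
def IsPolicy {S A : Type*} [Fintype A] (π : ℕ → S → A → ℝ) : Prop :=
  ∀ h s, (∀ a, 0 ≤ π h s a) ∧ (∑ a : A, π h s a) = 1

/-- `P` is a transition function. -/
def IsTransition {S A : Type*} [Fintype S] (P : ℕ → S → A → S → ℝ) : Prop :=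
  ∀ h s a, (∀ s', 0 ≤ P h s a s') ∧ (∑ s' : S, P h s a s') = 1

/-- `ρ` is an initial state distribution. -/
def IsInitDist {S : Type*} [Fintype S] (ρ : S → ℝ) : Prop :=
  (∀ s, 0 ≤ ρ s) ∧ (∑ s : S, ρ s) = 1

/-- Rewards take values in `[0,1]`. -/
def IsReward {S A : Type*} (r : ℕ → S → A → ℝ) : Prop :=
  ∀ h s a, 0 ≤ r h s a ∧ r h s a ≤ 1

/-- The VAIL state-action distribution matching objective
`L(π) = Σ_{h<H} Σ_{(s,a)} |P^π_h(s,a) − Q_h(s,a)|`. -/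
noncomputable def vailLoss {S A : Type*} [Fintype S] [Fintype A] (ρ : S → ℝ)
    (P : ℕ → S → A → S → ℝ) (π : ℕ → S → A → ℝ) (Q : ℕ → S → A → ℝ) (H : ℕ) : ℝ :=
  ∑ h ∈ Finset.range H, ∑ s : S, ∑ a : A, |saDist ρ P π h s a - Q h s a|

/-- The state reached at time `h` (0-indexed) when starting from `s` and following the
deterministic expert (`e` = expert action map, `f` = deterministic transition map). -/
def expState {S A : Type*} (f : ℕ → S → A → S) (e : ℕ → S → A) : ℕ → S → S
  | 0, s => s
  | h + 1, s => f h (expState f e h s) (e h (expState f e h s))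

open Classical in
/-- The behavioral cloning policy computed from the dataset of expert trajectories started
at the initial states `x i` (the dataset is determined by the initial states, since the
expert and the transitions are deterministic): it copies the expert action on visited
states and is uniform on non-visited states. -/
noncomputable def bcPolicy {S A : Type*} [Fintype A] {m : ℕ}
    (f : ℕ → S → A → S) (e : ℕ → S → A) (x : Fin m → S) : ℕ → S → A → ℝ :=
  fun h s a =>
    if ∃ i : Fin m, expState f e h (x i) = s then (if a = e h s then 1 else 0)
    else (1 : ℝ) / (Fintype.card A : ℝ)

section Decomposition

variable {S A : Type*} [Fintype S] [Fintype A] (P : ℕ → S → A → S → ℝ) (π : ℕ → S → A → ℝ)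

theorem stateDist_nonneg {ρ : S → ℝ} (hρ : ∀ s, 0 ≤ ρ s) (hP : ∀ h s a s', 0 ≤ P h s a s')
    (hπ : ∀ h s a, 0 ≤ π h s a) (h : ℕ) (s : S) : 0 ≤ stateDist ρ P π h s := by
  induction h generalizing s with
  | zero => exact hρ s
  | succ h ih =>
    exact sum_nonneg fun s' _ => sum_nonneg fun a _ =>
      mul_nonneg (mul_nonneg (ih s') (hπ h s' a)) (hP h s' a s)

theorem policyValue_nonneg {ρ : S → ℝ} {r : ℕ → S → A → ℝ} (hρ : ∀ s, 0 ≤ ρ s)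
    (hP : ∀ h s a s', 0 ≤ P h s a s') (hπ : ∀ h s a, 0 ≤ π h s a) (hr : ∀ h s a, 0 ≤ r h s a)
    (H : ℕ) : 0 ≤ policyValue ρ P π r H :=
  sum_nonneg fun h _ => sum_nonneg fun s _ => sum_nonneg fun a _ =>
    mul_nonneg (mul_nonneg (stateDist_nonneg P π hρ hP hπ h s) (hπ h s a)) (hr h s a)

variable [DecidableEq S]

theorem stateDist_eq_sum_single (ρ : S → ℝ) (h : ℕ) (s : S) :
    stateDist ρ P π h s = ∑ s₀, ρ s₀ * stateDist (Pi.single s₀ 1 : S → ℝ) P π h s := by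
  induction h generalizing s with
  | zero => simp [stateDist, Pi.single_apply]
  | succ h ih =>
    simp only [stateDist, ih, sum_mul, mul_sum]
    conv_rhs => rw [sum_comm]
    refine sum_congr rfl fun s' _ => ?_
    conv_rhs => rw [sum_comm]
    exact sum_congr rfl fun a _ => sum_congr rfl fun s₀ _ => by ring

theorem policyValue_eq_sum_single (ρ : S → ℝ) (r : ℕ → S → A → ℝ) (H : ℕ) :
    policyValue ρ P π r H
      = ∑ s₀, ρ s₀ * policyValue (Pi.single s₀ 1 : S → ℝ) P π r H := by
  simp only [policyValue, saDist, stateDist_eq_sum_single P π ρ, sum_mul, mul_sum]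
  conv_rhs =>
    rw [sum_comm]; arg 2; ext h; rw [sum_comm]; arg 2; ext s; rw [sum_comm]
  simp only [mul_assoc]

end Decomposition

section Deterministic

variable {S A : Type*} [Fintype S] [Fintype A] [DecidableEq S] [DecidableEq A]
  {P : ℕ → S → A → S → ℝ} {π : ℕ → S → A → ℝ} {f : ℕ → S → A → S} {e : ℕ → S → A} {s₀ : S}

theorem stateDist_single_eq_single_expState
    (hf : ∀ h s a s', P h s a s' = if s' = f h s a then (1 : ℝ) else 0)
    (hπ : ∀ h a, π h (expState f e h s₀) a = if a = e h (expState f e h s₀) then 1 else 0)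
    (h : ℕ) : stateDist (Pi.single s₀ 1 : S → ℝ) P π h = Pi.single (expState f e h s₀) 1 := by
  induction h with
  | zero => rfl
  | succ h ih =>
    ext s'
    simp only [stateDist]
    rw [Fintype.sum_eq_single (expState f e h s₀) fun s hs => by simp [ih, hs]]
    rw [Fintype.sum_eq_single (e h (expState f e h s₀)) fun a ha => by simp [hπ, ha]]
    simp [ih, hπ, hf, expState, Pi.single_apply]

theorem policyValue_single_eq_sum_expState
    (hf : ∀ h s a s', P h s a s' = if s' = f h s a then (1 : ℝ) else 0)
    (hπ : ∀ h a, π h (expState f e h s₀) a = if a = e h (expState f e h s₀) then 1 else 0)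
    (r : ℕ → S → A → ℝ) (H : ℕ) :
    policyValue (Pi.single s₀ 1 : S → ℝ) P π r H
      = ∑ h ∈ range H, r h (expState f e h s₀) (e h (expState f e h s₀)) := by
  simp [policyValue, saDist, stateDist_single_eq_single_expState hf hπ, Pi.single_apply, hπ]

end Deterministic

section BehavioralCloning

variable {S A : Type*} {m : ℕ}

theorem bcPolicy_nonneg [Fintype A] (f : ℕ → S → A → S) (e : ℕ → S → A) (x : Fin m → S)
    (h : ℕ) (s : S) (a : A) : 0 ≤ bcPolicy f e x h s a := by
  unfold bcPolicy
  split_ifs <;> positivity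

theorem bcPolicy_expState_of_mem [DecidableEq S] [Fintype A] [DecidableEq A]
    (f : ℕ → S → A → S) (e : ℕ → S → A) {x : Fin m → S} {s₀ : S} (hs₀ : s₀ ∈ univ.image x)
    (h : ℕ) (a : A) :
    bcPolicy f e x h (expState f e h s₀) a = if a = e h (expState f e h s₀) then 1 else 0 := by
  obtain ⟨i, -, rfl⟩ := mem_image.1 hs₀
  rw [bcPolicy, if_pos ⟨i, rfl⟩]
  congr

end BehavioralCloning

section MissingMass

variable {S : Type*} [Fintype S] [DecidableEq S]

def missingMass {ι : Type*} [Fintype ι] (ρ : S → ℝ) (x : ι → S) : ℝ :=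
  ∑ s ∈ (univ.image x)ᶜ, ρ s

theorem sum_ite_mem_image_prod (ρ : S → ℝ) (m : ℕ) (s : S) :
    ∑ x : Fin m → S, (if s ∈ univ.image x then 0 else ∏ i, ρ (x i)) = (∑ t, ρ t - ρ s) ^ m := by
  have hterm : ∀ x : Fin m → S, (if s ∈ univ.image x then 0 else ∏ i, ρ (x i))
      = ∏ i, Function.update ρ s 0 (x i) := by
    intro x
    split_ifs with hs
    · obtain ⟨i, -, hi⟩ := mem_image.1 hs
      rw [prod_eq_zero (mem_univ i) (by simp [hi])]
    · simp only [mem_image, mem_univ, true_and, not_exists] at hs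
      exact prod_congr rfl fun i _ => (Function.update_of_ne (hs i) _ _).symm
  rw [sum_congr rfl fun x _ => hterm x, ← Fintype.sum_pow,
    sum_update_of_mem (mem_univ s), ← add_sum_erase _ _ (mem_univ s)]
  simp

theorem sum_prod_mul_missingMass {ρ : S → ℝ} (hρ : ∑ s, ρ s = 1) (m : ℕ) :
    ∑ x : Fin m → S, (∏ i, ρ (x i)) * missingMass ρ x = ∑ s, ρ s * (1 - ρ s) ^ m := by
  calc ∑ x : Fin m → S, (∏ i, ρ (x i)) * missingMass ρ x
      = ∑ x : Fin m → S, ∑ s, ρ s * (if s ∈ univ.image x then 0 else ∏ i, ρ (x i)) := by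
        refine sum_congr rfl fun x _ => ?_
        rw [missingMass, ← univ_inter (univ.image x)ᶜ, ← sum_ite_mem, mul_sum]
        refine sum_congr rfl fun s _ => ?_
        simp only [mem_compl, ite_not, mul_ite, ite_mul, mul_zero, zero_mul, mul_comm]
    _ = ∑ s, ρ s * (1 - ρ s) ^ m := by
        rw [sum_comm]
        simp_rw [← mul_sum, sum_ite_mem_image_prod, hρ]

end MissingMass

theorem mul_one_sub_pow_le_one_div_exp_mul {p : ℝ} (hp₀ : 0 ≤ p) (hp₁ : p ≤ 1) {m : ℕ}
    (hm : 0 < m) : p * (1 - p) ^ m ≤ 1 / (Real.exp 1 * m) := by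
  have hm' : (0 : ℝ) < m := Nat.cast_pos.2 hm
  calc p * (1 - p) ^ m = p * (1 - p * m / m) ^ m := by field_simp
    _ ≤ p * Real.exp (-(p * m)) := by
      gcongr
      exact Real.one_sub_div_pow_le_exp_neg (by nlinarith)
    _ = p * m * Real.exp (-(p * m)) / m := by field_simp
    _ ≤ Real.exp (-1) / m := by
      gcongr
      exact Real.mul_exp_neg_le_exp_neg_one _
    _ = 1 / (Real.exp 1 * m) := by rw [Real.exp_neg]; field_simp

section Gap

variable {S A : Type*} [Fintype S] [Fintype A] [DecidableEq S] [DecidableEq A] {m : ℕ}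
  {P : ℕ → S → A → S → ℝ} {πE : ℕ → S → A → ℝ} {r : ℕ → S → A → ℝ}
  {f : ℕ → S → A → S} {e : ℕ → S → A}

theorem policyValue_single_sub_bcPolicy_le (hr : IsReward r)
    (hf : ∀ h s a s', P h s a s' = if s' = f h s a then (1 : ℝ) else 0)
    (he : ∀ h s a, πE h s a = if a = e h s then (1 : ℝ) else 0) (x : Fin m → S) (s₀ : S)
    (H : ℕ) :
    policyValue (Pi.single s₀ 1 : S → ℝ) P πE r H
        - policyValue (Pi.single s₀ 1 : S → ℝ) P (bcPolicy f e x) r H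
      ≤ if s₀ ∈ univ.image x then 0 else (H : ℝ) := by
  have hE := policyValue_single_eq_sum_expState (s₀ := s₀) hf (fun h a => he h _ a) r H
  split_ifs with hs₀
  · rw [hE, policyValue_single_eq_sum_expState hf (bcPolicy_expState_of_mem f e hs₀), sub_self]
  · have hE_le : policyValue (Pi.single s₀ 1 : S → ℝ) P πE r H ≤ H := by
      rw [hE]
      simpa using sum_le_card_nsmul (range H) _ 1 fun h _ => (hr h _ _).2
    have hBC_nonneg : 0 ≤ policyValue (Pi.single s₀ 1 : S → ℝ) P (bcPolicy f e x) r H :=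
      policyValue_nonneg P _ (fun s => by rw [Pi.single_apply]; positivity)
        (fun h s a s' => by rw [hf]; positivity) (bcPolicy_nonneg f e x)
        (fun h s a => (hr h s a).1) H
    linarith

theorem policyValue_sub_bcPolicy_le_mul_missingMass {ρ : S → ℝ} (hρ : ∀ s, 0 ≤ ρ s)
    (hr : IsReward r) (hf : ∀ h s a s', P h s a s' = if s' = f h s a then (1 : ℝ) else 0)
    (he : ∀ h s a, πE h s a = if a = e h s then (1 : ℝ) else 0) (x : Fin m → S) (H : ℕ) :
    policyValue ρ P πE r H - policyValue ρ P (bcPolicy f e x) r H ≤ H * missingMass ρ x := by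
  rw [policyValue_eq_sum_single P πE ρ, policyValue_eq_sum_single P (bcPolicy f e x) ρ,
    ← sum_sub_distrib, missingMass, mul_sum]
  calc _ ≤ ∑ s₀, ρ s₀ * (if s₀ ∈ univ.image x then 0 else (H : ℝ)) :=
        sum_le_sum fun s₀ _ => by
          rw [← mul_sub]
          exact mul_le_mul_of_nonneg_left (policyValue_single_sub_bcPolicy_le hr hf he x s₀ H)
            (hρ s₀)
    _ = ∑ s ∈ (univ.image x)ᶜ, H * ρ s := by
        rw [← univ_inter (univ.image x)ᶜ, ← sum_ite_mem]
        simp only [mem_compl, ite_not, mul_ite, mul_zero, mul_comm]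

end Gap

theorem bc_deterministic_expected_gap_general {S A : Type*} [Fintype S] [Fintype A]
    [DecidableEq S] [DecidableEq A]
    (ρ : S → ℝ) (P : ℕ → S → A → S → ℝ) (r : ℕ → S → A → ℝ) (πE : ℕ → S → A → ℝ)
    (H : ℕ)
    (hρ : IsInitDist ρ) (hr : IsReward r)
    (f : ℕ → S → A → S) (hf : ∀ h s a s', P h s a s' = if s' = f h s a then (1 : ℝ) else 0)
    (e : ℕ → S → A) (he : ∀ h s a, πE h s a = if a = e h s then (1 : ℝ) else 0)
    (m : ℕ) (hm : 1 ≤ m) :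
    policyValue ρ P πE r H
        - ∑ x : Fin m → S, (∏ i : Fin m, ρ (x i)) * policyValue ρ P (bcPolicy f e x) r H
      ≤ (Fintype.card S : ℝ) * H / (Real.exp 1 * m) := by
  have hweights : ∑ x : Fin m → S, ∏ i, ρ (x i) = 1 := by rw [← Fintype.sum_pow, hρ.2, one_pow]
  have hρ_le_one (s : S) : ρ s ≤ 1 := hρ.2 ▸ single_le_sum (fun t _ => hρ.1 t) (mem_univ s)
  calc _ = ∑ x : Fin m → S, (∏ i, ρ (x i))
          * (policyValue ρ P πE r H - policyValue ρ P (bcPolicy f e x) r H) := by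
        simp only [mul_sub, sum_sub_distrib, ← sum_mul, hweights, one_mul]
    _ ≤ ∑ x : Fin m → S, (∏ i, ρ (x i)) * (H * missingMass ρ x) :=
        sum_le_sum fun x _ => mul_le_mul_of_nonneg_left
          (policyValue_sub_bcPolicy_le_mul_missingMass hρ.1 hr hf he x H)
          (prod_nonneg fun i _ => hρ.1 _)
    _ = H * ∑ s, ρ s * (1 - ρ s) ^ m := by
        rw [← sum_prod_mul_missingMass hρ.2, mul_sum]
        exact sum_congr rfl fun x _ => by ring
    _ ≤ H * ∑ _s : S, 1 / (Real.exp 1 * m) := by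
        gcongr with s
        exact mul_one_sub_pow_le_one_div_exp_mul (hρ.1 s) (hρ_le_one s) hm
    _ = (Fintype.card S : ℝ) * H / (Real.exp 1 * m) := by
        rw [sum_const, card_univ, nsmul_eq_mul]
        ring

/-- for any episodic tabular MDP with deterministic transitions and a
deterministic expert policy, with a dataset of `m ≥ 1` i.i.d. expert trajectories
(determined by `m` i.i.d. initial states drawn from `ρ`), behavioral cloning satisfies
`V^{πE} − E_D[V^{πBC(D)}] ≤ |S| H / (e m)`. -/
theorem bc_deterministic_expected_gap {S A : Type*} [Fintype S] [Fintype A]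
    [Nonempty S] [Nonempty A] [DecidableEq S] [DecidableEq A]
    (ρ : S → ℝ) (P : ℕ → S → A → S → ℝ) (r : ℕ → S → A → ℝ) (πE : ℕ → S → A → ℝ)
    (H : ℕ) (hH : 1 ≤ H)
    (hρ : IsInitDist ρ) (hP : IsTransition P) (hr : IsReward r) (hE : IsPolicy πE)
    (f : ℕ → S → A → S) (hf : ∀ h s a s', P h s a s' = if s' = f h s a then (1 : ℝ) else 0)
    (e : ℕ → S → A) (he : ∀ h s a, πE h s a = if a = e h s then (1 : ℝ) else 0)
    (m : ℕ) (hm : 1 ≤ m) :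
    policyValue ρ P πE r H
        - ∑ x : Fin m → S, (∏ i : Fin m, ρ (x i)) * policyValue ρ P (bcPolicy f e x) r H
      ≤ (Fintype.card S : ℝ) * H / (Real.exp 1 * m) :=
  bc_deterministic_expected_gap_general ρ P r πE H hρ hr f hf e he m hm
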